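/- The LM_n-algebra R_{n,r} of Moisil representable functions L_n^r → L_n (with pointwise operations) is isomorphic to the product over all tuples (a_1,...,a_r) ∈ L_n^r of the subalgebras M(a⃗) = {0,1,a_1,...,a_r,1-a_1,...,1-a_r}, via the map f ↦ (f(a⃗))_{a⃗}. -/

import Mathlib

/-- The underlying set of the standard LM_n-algebra: {0, 1/n, ..., (n-1)/n, 1} ⊆ ℚ. -/
def Ln (n : ℕ) : Set ℚ := {x | ∃ j : ℕ, j ≤ n ∧ x = (j : ℚ) / n}

/-- The Chrysippian endomorphism Δ_i on ℚ: on L_n, Δ_i(j/n) = 1 iff i + j ≥ n + 1. -/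
def Delta (n i : ℕ) (x : ℚ) : ℚ := if (n : ℚ) + 1 ≤ (i : ℚ) + x * n then 1 else 0

/-- Terms in the signature (∨, ∧, N, 0, 1, Δ_1, ..., Δ_n) over variables x_1, ..., x_r. -/
inductive LMTerm (r : ℕ) where
  | var (i : Fin r)
  | zero
  | one
  | neg (t : LMTerm r)
  | sup (t u : LMTerm r)
  | inf (t u : LMTerm r)
  | delta (i : ℕ) (t : LMTerm r)

/-- Evaluation of a term in the standard LM_n-algebra under a valuation φ. -/
def LMTerm.eval (n : ℕ) {r : ℕ} (φ : Fin r → ℚ) : LMTerm r → ℚ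
  | .var i => φ i
  | .zero => 0
  | .one => 1
  | .neg t => 1 - t.eval n φ
  | .sup t u => max (t.eval n φ) (u.eval n φ)
  | .inf t u => min (t.eval n φ) (u.eval n φ)
  | .delta i t => Delta n i (t.eval n φ)

/-- A function is Moisil representable if some term evaluates to it under
every valuation into L_n. -/
def Representable (n r : ℕ) (f : (Fin r → ℚ) → ℚ) : Prop :=
  ∃ t : LMTerm r, ∀ φ : Fin r → ℚ, (∀ i, φ i ∈ Ln n) → t.eval n φ = f φ

/-- The set {0, 1, a_1, ..., a_r, 1 - a_1, ..., 1 - a_r}. -/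
def Mset (r : ℕ) (a : Fin r → ℚ) : Set ℚ :=
  {x | x = 0 ∨ x = 1 ∨ ∃ i : Fin r, x = a i ∨ x = 1 - a i}

/-- Tuples (a_1, ..., a_r) ∈ L_n^r. -/
def DTup (n r : ℕ) := {a : Fin r → ℚ // ∀ i, a i ∈ Ln n}

/-- Representability for functions defined on L_n^r. -/
def RepD (n r : ℕ) (f : DTup n r → ℚ) : Prop :=
  ∃ t : LMTerm r, ∀ a : DTup n r, t.eval n a.1 = f a

/-!
A term evaluates at a⃗ into M(a⃗), since M(a⃗) contains the variables and constants and is closed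
under 1 - x, max, min and the {0,1}-valued Δ_i; so f ↦ (f(a⃗))_{a⃗} is a well-defined injection.
Conversely, Δ_{n+1-j}(x) ∧ ¬Δ_{n-j}(x) is the characteristic function of j/n on L_n, so every
point of the finite set L_n^r has a representable characteristic function χ_{a⃗}, and a family
(g(a⃗))_{a⃗} with g(a⃗) ∈ M(a⃗) is represented by ⋁_{a⃗} (χ_{a⃗} ∧ t_{a⃗}), where t_{a⃗} is one of
the terms 0, 1, x_i, ¬x_i taking the value g(a⃗) at a⃗.
-/

lemma Ln_subset_Icc (n : ℕ) : Ln n ⊆ Set.Icc 0 1 := by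
  rintro _ ⟨j, hj, rfl⟩
  exact ⟨by positivity, div_le_one_of_le₀ (by exact_mod_cast hj) n.cast_nonneg⟩

lemma Ln_finite (n : ℕ) : (Ln n).Finite := by
  refine ((Set.finite_Iic n).image fun j : ℕ => (j : ℚ) / n).subset ?_
  rintro _ ⟨j, hj, rfl⟩
  exact ⟨j, hj, rfl⟩

instance (n r : ℕ) : Finite (DTup n r) :=
  have := (Ln_finite n).to_subtype
  Finite.of_injective (fun a i => (⟨a.1 i, a.2 i⟩ : Ln n)) fun _ _ h =>
    Subtype.ext <| funext fun i => congrArg Subtype.val (congrFun h i)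

lemma Mset_subset_Icc {n r : ℕ} (a : DTup n r) : Mset r a.1 ⊆ Set.Icc 0 1 := by
  have ha := fun i => Ln_subset_Icc n (a.2 i)
  rintro x (rfl | rfl | ⟨i, rfl | rfl⟩)
  · simp
  · simp
  · exact ha i
  · exact ⟨by linarith [(ha i).2], by linarith [(ha i).1]⟩

lemma Delta_eq_zero_or_one (n i : ℕ) (x : ℚ) : Delta n i x = 0 ∨ Delta n i x = 1 := by
  unfold Delta; split_ifs <;> simp

lemma Delta_natCast_div {n : ℕ} (hn : n ≠ 0) (i j : ℕ) :
    Delta n i (j / n) = if n + 1 ≤ i + j then 1 else 0 := by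
  unfold Delta
  rw [div_mul_cancel₀ _ (by exact_mod_cast hn)]
  norm_cast

namespace LMTerm

variable {n r : ℕ}

lemma eval_mem_Mset (t : LMTerm r) (φ : Fin r → ℚ) : t.eval n φ ∈ Mset r φ := by
  induction t with
  | var i => exact Or.inr (Or.inr ⟨i, Or.inl rfl⟩)
  | zero => exact Or.inl rfl
  | one => exact Or.inr (Or.inl rfl)
  | neg t ih =>
    rcases ih with h | h | ⟨i, h | h⟩
    · exact Or.inr (Or.inl (by simp [eval, h]))
    · exact Or.inl (by simp [eval, h])
    · exact Or.inr (Or.inr ⟨i, Or.inr (by simp [eval, h])⟩)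
    · exact Or.inr (Or.inr ⟨i, Or.inl (by simp [eval, h])⟩)
  | sup t u iht ihu => rcases max_choice (t.eval n φ) (u.eval n φ) with h | h <;> simp_all [eval]
  | inf t u iht ihu => rcases min_choice (t.eval n φ) (u.eval n φ) with h | h <;> simp_all [eval]
  | delta i t _ =>
    rcases Delta_eq_zero_or_one n i (t.eval n φ) with h | h <;> simp [Mset, eval, h]

/-- On L_n, `Δ_{n+1-j} x = 1` iff `x ≥ j/n` and `Δ_{n-j} x = 1` iff `x > j/n`. -/
def chi (n j : ℕ) (t : LMTerm r) : LMTerm r :=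
  .inf (.delta (n + 1 - j) t) (.neg (.delta (n - j) t))

lemma eval_chi (hn : n ≠ 0) {j : ℕ} (hj : j ≤ n) (t : LMTerm r) (φ : Fin r → ℚ)
    (ht : t.eval n φ ∈ Ln n) : (chi n j t).eval n φ = if t.eval n φ = j / n then 1 else 0 := by
  obtain ⟨k, hk, hkt⟩ := ht
  have hn' : (n : ℚ) ≠ 0 := by exact_mod_cast hn
  simp only [chi, eval, hkt, Delta_natCast_div hn, div_left_inj' hn', Nat.cast_inj]
  split_ifs <;> first | omega | norm_num

end LMTerm

namespace RepD

variable {n r : ℕ} {f g : DTup n r → ℚ}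

lemma mem_Mset (hf : RepD n r f) (a : DTup n r) : f a ∈ Mset r a.1 := by
  obtain ⟨t, ht⟩ := hf
  exact ht a ▸ t.eval_mem_Mset a.1

lemma const_zero : RepD n r fun _ => 0 := ⟨.zero, fun _ => rfl⟩

lemma const_one : RepD n r fun _ => 1 := ⟨.one, fun _ => rfl⟩

lemma max (hf : RepD n r f) (hg : RepD n r g) : RepD n r fun a => max (f a) (g a) := by
  obtain ⟨t, ht⟩ := hf
  obtain ⟨u, hu⟩ := hg
  exact ⟨.sup t u, fun a => by simp [LMTerm.eval, ht, hu]⟩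

lemma min (hf : RepD n r f) (hg : RepD n r g) : RepD n r fun a => min (f a) (g a) := by
  obtain ⟨t, ht⟩ := hf
  obtain ⟨u, hu⟩ := hg
  exact ⟨.inf t u, fun a => by simp [LMTerm.eval, ht, hu]⟩

lemma exists_apply_eq {a : DTup n r} {x : ℚ} (hx : x ∈ Mset r a.1) :
    ∃ f, RepD n r f ∧ f a = x := by
  rcases hx with rfl | rfl | ⟨i, rfl | rfl⟩
  exacts [⟨_, const_zero, rfl⟩, ⟨_, const_one, rfl⟩, ⟨_, ⟨.var i, fun _ => rfl⟩, rfl⟩,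
    ⟨_, ⟨.neg (.var i), fun _ => rfl⟩, rfl⟩]

lemma ite_coord_eq (hn : n ≠ 0) (i : Fin r) {c : ℚ} (hc : c ∈ Ln n) :
    RepD n r fun b => if b.1 i = c then 1 else 0 := by
  obtain ⟨j, hj, rfl⟩ := hc
  exact ⟨LMTerm.chi n j (.var i), fun b => LMTerm.eval_chi hn hj _ _ (b.2 i)⟩

open Classical in
lemma ite_eq (hn : n ≠ 0) (a : DTup n r) : RepD n r fun b => if b = a then 1 else 0 := by
  suffices h : ∀ s : Finset (Fin r), RepD n r fun b => if ∀ i ∈ s, b.1 i = a.1 i then 1 else 0 by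
    convert h Finset.univ using 3 with b
    simpa using ⟨fun h _ => h ▸ rfl, fun h => Subtype.ext (funext h)⟩
  intro s
  induction s using Finset.induction_on with
  | empty => simpa using const_one
  | insert i s _ ih =>
    convert (ite_coord_eq hn i (a.2 i)).min ih using 2 with b
    simp only [Finset.forall_mem_insert]
    split_ifs <;> simp_all

end RepD

lemma repD_iff_forall_mem_Mset {n r : ℕ} (hn : n ≠ 0) (f : DTup n r → ℚ) :
    RepD n r f ↔ ∀ a, f a ∈ Mset r a.1 := by
  refine ⟨RepD.mem_Mset, fun hf => ?_⟩
  classical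
  have := Fintype.ofFinite (DTup n r)
  choose g hg hga using fun a => RepD.exists_apply_eq (hf a)
  suffices h : ∀ s : Finset (DTup n r), RepD n r fun b => if b ∈ s then f b else 0 by
    simpa using h Finset.univ
  intro s
  induction s using Finset.induction_on with
  | empty => simpa using RepD.const_zero
  | insert a s has ih =>
    convert ih.max ((RepD.ite_eq hn a).min (hg a)) using 2 with b
    have hfb := Mset_subset_Icc b (hf b)
    by_cases hb : b = a
    · subst hb
      simp [has, hga, hfb.1, hfb.2]
    · have hs : 0 ≤ if b ∈ s then f b else 0 := by split_ifs; exacts [hfb.1, le_rfl]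
      simp [hb, (Mset_subset_Icc b ((hg a).mem_Mset b)).1, hs]

theorem representable_iso_product_general (n r : ℕ) (hn : 2 ≤ n) :
    ∃ e : {f : DTup n r → ℚ // RepD n r f} ≃ ((a : DTup n r) → (Mset r a.1)),
      ∀ (f : {f : DTup n r → ℚ // RepD n r f}) (a : DTup n r),
        ((e f a : ℚ)) = f.1 a :=
  ⟨(Equiv.subtypeEquivRight (repD_iff_forall_mem_Mset (by omega))).trans
    Equiv.subtypePiEquivPi, fun _ _ => rfl⟩

/-- The LM_n-algebra R_{n,r} of Moisil representable functions L_n^r → L_n is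
isomorphic to the product, over all tuples a⃗ ∈ L_n^r, of the subalgebras
M(a⃗) = {0, 1, a_1, ..., a_r, 1-a_1, ..., 1-a_r}, via the map f ↦ (f(a⃗))_{a⃗}. -/
theorem representable_iso_product (n r : ℕ) (hn : 2 ≤ n) (hr : 1 ≤ r) :
    ∃ e : {f : DTup n r → ℚ // RepD n r f} ≃ ((a : DTup n r) → (Mset r a.1)),
      ∀ (f : {f : DTup n r → ℚ // RepD n r f}) (a : DTup n r),
        ((e f a : ℚ)) = f.1 a :=
  representable_iso_product_general n r hn
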